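/- arXiv:2009.10788 — 4 statements merged into one kernel-verified Lean document; each statement's English description precedes it below -/
import Mathlib

section
/- Let m ≥ 1 and let α = (α_1,…,α_m) be a vector of positive real numbers. Then the Lebesgue integral of the monomial ∏_{j=1}^m x_j^{α_j} over the set {x ∈ ℝ^m : x_j > 0 for all j and ∑_{j=1}^m x_j^2 < 1} equals (∏_{j=1}^m Γ((α_j+1)/2)) / (Γ(∑_{j=1}^m (α_j+1)/2) · 2^m · ∑_{j=1}^m (α_j+1)/2). -/
/-!
Let `ν` be the measure with density `∏ x_j ^ α_j` on the open positive orthant. Since the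
density is homogeneous of degree `∑ α_j`, scaling gives `ν {|x|² < t} = t ^ s * ν {|x|² < 1}` with
`s = ∑ (α_j + 1) / 2`. Integrating `exp (-|x|²)` against `ν` over the layers `{|x|² < t}` then
gives `Γ(s + 1) * ν {|x|² < 1}`, while by Fubini the same integral is the product of the
one-dimensional moments `∫₀^∞ y ^ α_j exp (-y²) dy = Γ((α_j + 1) / 2) / 2`.
-/

open MeasureTheory Real Set Module
open scoped ENNReal

section LayerCake

variable {X : Type*} [MeasurableSpace X] (ν : Measure X) [SFinite ν] {g : X → ℝ}

lemma lintegral_Ioi_exp_neg (a : ℝ) :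
    ∫⁻ t in Ioi a, ENNReal.ofReal (exp (-t)) = ENNReal.ofReal (exp (-a)) := by
  have h_int : IntegrableOn (fun t => exp (-t)) (Ioi a) := by
    simpa using exp_neg_integrableOn_Ioi a one_pos
  rw [← ofReal_integral_eq_lintegral_ofReal h_int (.of_forall fun _ => (exp_pos _).le),
    integral_exp_neg_Ioi]

lemma lintegral_Ioi_exp_neg_mul_rpow {s : ℝ} (hs : -1 < s) :
    ∫⁻ t in Ioi 0, ENNReal.ofReal (exp (-t)) * ENNReal.ofReal (t ^ s) =
      ENNReal.ofReal (Gamma (s + 1)) := by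
  rw [Gamma_eq_integral (by linarith), ofReal_integral_eq_lintegral_ofReal
    (GammaIntegral_convergent (by linarith)) (ae_restrict_of_forall_mem measurableSet_Ioi
      fun t ht => mul_nonneg (exp_pos _).le (rpow_nonneg (le_of_lt ht) _))]
  refine setLIntegral_congr_fun measurableSet_Ioi fun t _ => ?_
  rw [← ENNReal.ofReal_mul (exp_pos _).le, add_sub_cancel_right]

theorem lintegral_exp_neg_eq_lintegral_mul_measure_lt (hg : Measurable g) :
    ∫⁻ x, ENNReal.ofReal (exp (-g x)) ∂ν =
      ∫⁻ t, ENNReal.ofReal (exp (-t)) * ν {x | g x < t} := by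
  set F : X → ℝ → ℝ≥0∞ := fun x t =>
    {p : X × ℝ | g p.1 < p.2}.indicator (fun p => ENNReal.ofReal (exp (-p.2))) (x, t)
  have hF : Measurable (Function.uncurry F) :=
    (measurable_snd.neg.exp.ennreal_ofReal).indicator
      (measurableSet_lt (hg.comp measurable_fst) measurable_snd)
  have h_fst (x : X) : ∫⁻ t, F x t = ENNReal.ofReal (exp (-g x)) := by
    rw [← lintegral_Ioi_exp_neg, ← lintegral_indicator measurableSet_Ioi]
    rfl
  have h_snd (t : ℝ) : ∫⁻ x, F x t ∂ν = ENNReal.ofReal (exp (-t)) * ν {x | g x < t} := by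
    rw [show {x | g x < t} = g ⁻¹' Iio t from rfl,
      ← lintegral_indicator_const (hg measurableSet_Iio)]
    rfl
  simp_rw [← h_fst, lintegral_lintegral_swap hF.aemeasurable, h_snd]

theorem lintegral_exp_neg_eq_Gamma_mul {s : ℝ} (hs : -1 < s) (hg : Measurable g)
    (hg_nonneg : ∀ x, 0 ≤ g x)
    (h_scale : ∀ t, 0 < t → ν {x | g x < t} = ENNReal.ofReal (t ^ s) * ν {x | g x < 1}) :
    ∫⁻ x, ENNReal.ofReal (exp (-g x)) ∂ν =
      ENNReal.ofReal (Gamma (s + 1)) * ν {x | g x < 1} := by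
  have h_supp :
      (Function.support fun t => ENNReal.ofReal (exp (-t)) * ν {x | g x < t}) ⊆ Ioi 0 := by
    intro t ht
    by_contra h
    have : {x | g x < t} = ∅ := eq_empty_of_forall_notMem fun x hx =>
      h (lt_of_le_of_lt (hg_nonneg x) hx)
    simp [this] at ht
  rw [lintegral_exp_neg_eq_lintegral_mul_measure_lt ν hg,
    ← setLIntegral_eq_of_support_subset h_supp,
    setLIntegral_congr_fun measurableSet_Ioi fun t ht => by rw [h_scale t ht, ← mul_assoc],
    lintegral_mul_const _ (by fun_prop), lintegral_Ioi_exp_neg_mul_rpow hs]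

end LayerCake

section Homogeneous

variable {E : Type*} [NormedAddCommGroup E] [NormedSpace ℝ E] [MeasurableSpace E]
  [BorelSpace E] [FiniteDimensional ℝ E] (μ : Measure E) [μ.IsAddHaarMeasure]

lemma lintegral_comp_smul_of_pos {F : E → ℝ≥0∞} (hF : Measurable F) {r : ℝ} (hr : 0 < r) :
    ∫⁻ x, F (r • x) ∂μ = ENNReal.ofReal ((r ^ finrank ℝ E)⁻¹) * ∫⁻ x, F x ∂μ := by
  rw [← lintegral_map hF (measurable_const_smul r), Measure.map_addHaar_smul μ hr.ne',
    lintegral_smul_measure, abs_of_pos (by positivity), smul_eq_mul]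

theorem withDensity_measure_lt_eq_rpow_mul {f : E → ℝ≥0∞} {g : E → ℝ} {d p : ℝ} (hp : 0 < p)
    (hf : Measurable f) (hg : Measurable g)
    (hf_smul : ∀ r : ℝ, 0 < r → ∀ x, f (r • x) = ENNReal.ofReal (r ^ d) * f x)
    (hg_smul : ∀ r : ℝ, 0 < r → ∀ x, g (r • x) = r ^ p * g x) {t : ℝ} (ht : 0 < t) :
    μ.withDensity f {x | g x < t} =
      ENNReal.ofReal (t ^ ((finrank ℝ E + d) / p)) * μ.withDensity f {x | g x < 1} := by
  set r := t ^ p⁻¹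
  have hr : 0 < r := rpow_pos_of_pos ht _
  have hrp : r ^ p = t := by rw [← rpow_mul ht.le, inv_mul_cancel₀ hp.ne', rpow_one]
  have h_lt (c : ℝ) : MeasurableSet {x | g x < c} := hg measurableSet_Iio
  have h_indicator (x : E) : {x | g x < t}.indicator f (r • x) =
      ENNReal.ofReal (r ^ d) * {x | g x < 1}.indicator f x := by
    have h_iff : g (r • x) < t ↔ g x < 1 := by
      rw [hg_smul r hr, ← hrp, mul_lt_iff_lt_one_right (rpow_pos_of_pos hr p)]
    by_cases hx : g x < 1
    · rw [indicator_of_mem (show r • x ∈ {x | g x < t} from h_iff.mpr hx),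
        indicator_of_mem (show x ∈ {x | g x < 1} from hx), hf_smul r hr]
    · rw [indicator_of_notMem (show r • x ∉ {x | g x < t} from mt h_iff.mp hx),
        indicator_of_notMem (show x ∉ {x | g x < 1} from hx), mul_zero]
  have h_change : ENNReal.ofReal (r ^ d) * μ.withDensity f {x | g x < 1} =
      ENNReal.ofReal ((r ^ finrank ℝ E)⁻¹) * μ.withDensity f {x | g x < t} := by
    have := lintegral_comp_smul_of_pos μ (hf.indicator (h_lt t)) hr
    simp_rw [h_indicator] at this
    rwa [lintegral_const_mul _ (hf.indicator (h_lt 1)), lintegral_indicator (h_lt _),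
      lintegral_indicator (h_lt _), ← withDensity_apply _ (h_lt _),
      ← withDensity_apply _ (h_lt _)] at this
  have hrn : 0 < r ^ finrank ℝ E := by positivity
  calc μ.withDensity f {x | g x < t}
      = ENNReal.ofReal (r ^ finrank ℝ E) *
          (ENNReal.ofReal ((r ^ finrank ℝ E)⁻¹) * μ.withDensity f {x | g x < t}) := by
        rw [← mul_assoc, ← ENNReal.ofReal_mul hrn.le, mul_inv_cancel₀ hrn.ne',
          ENNReal.ofReal_one, one_mul]
    _ = ENNReal.ofReal (r ^ finrank ℝ E) *
          (ENNReal.ofReal (r ^ d) * μ.withDensity f {x | g x < 1}) := by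
        rw [h_change]
    _ = _ := by
        rw [← mul_assoc, ← ENNReal.ofReal_mul hrn.le, ← rpow_natCast, ← rpow_add hr, ← hrp,
          ← rpow_mul hr.le, mul_div_cancel₀ _ hp.ne']

end Homogeneous

section Orthant

variable {ι : Type*} [Fintype ι] (a : ι → ℝ)

noncomputable def orthantMonomial (x : ι → ℝ) : ℝ :=
  ∏ j, (Ioi 0).indicator (· ^ a j) (x j)

lemma orthantMonomial_eq_indicator :
    orthantMonomial a = {x | ∀ j, 0 < x j}.indicator fun x => ∏ j, x j ^ a j := by
  ext x
  by_cases hx : ∀ j, 0 < x j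
  · rw [indicator_of_mem (show x ∈ {x | ∀ j, 0 < x j} from hx)]
    exact Finset.prod_congr rfl fun j _ => indicator_of_mem (hx j) _
  · obtain ⟨j, hj⟩ := not_forall.mp hx
    rw [indicator_of_notMem (show x ∉ {x | ∀ j, 0 < x j} from hx)]
    exact Finset.prod_eq_zero (Finset.mem_univ j) (indicator_of_notMem hj _)

lemma orthantMonomial_nonneg (x : ι → ℝ) : 0 ≤ orthantMonomial a x :=
  Finset.prod_nonneg fun _ _ => indicator_nonneg (fun _ hy => rpow_nonneg (le_of_lt hy) _) _

lemma measurable_orthantMonomial : Measurable (orthantMonomial a) :=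
  Finset.measurable_prod _ fun j _ =>
    ((measurable_id.pow_const (a j)).indicator measurableSet_Ioi).comp (measurable_pi_apply j)

lemma orthantMonomial_smul {r : ℝ} (hr : 0 < r) (x : ι → ℝ) :
    orthantMonomial a (r • x) = r ^ (∑ j, a j) * orthantMonomial a x := by
  rw [orthantMonomial, orthantMonomial, rpow_sum_of_pos hr, ← Finset.prod_mul_distrib]
  refine Finset.prod_congr rfl fun j _ => ?_
  rw [Pi.smul_apply, smul_eq_mul]
  by_cases hx : 0 < x j
  · rw [indicator_of_mem (mem_Ioi.mpr (mul_pos hr hx)), indicator_of_mem (mem_Ioi.mpr hx),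
      mul_rpow hr.le hx.le]
  · have hrx : r * x j ∉ Ioi 0 := fun h => hx (pos_of_mul_pos_right h hr.le)
    rw [indicator_of_notMem hrx, indicator_of_notMem (show x j ∉ Ioi 0 from hx), mul_zero]

lemma orthantMonomial_mul_exp_neg_sum_sq (x : ι → ℝ) :
    orthantMonomial a x * exp (-∑ j, x j ^ 2) =
      ∏ j, (Ioi 0).indicator (fun y => y ^ a j * exp (-y ^ 2)) (x j) := by
  simp_rw [← Finset.sum_neg_distrib, exp_sum, orthantMonomial, ← Finset.prod_mul_distrib,
    indicator_mul_left]

theorem lintegral_orthantMonomial_mul_exp_neg_sum_sq (ha : ∀ j, -1 < a j) :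
    ∫⁻ x, ENNReal.ofReal (orthantMonomial a x * exp (-∑ j, x j ^ 2)) =
      ENNReal.ofReal (∏ j, Gamma ((a j + 1) / 2) / 2) := by
  have h_int (j : ι) : IntegrableOn (fun y => y ^ a j * exp (-y ^ 2)) (Ioi 0) := by
    simpa using integrableOn_rpow_mul_exp_neg_mul_sq one_pos (ha j)
  have h_integral (j : ι) :
      ∫ y in Ioi 0, y ^ a j * exp (-y ^ 2) = Gamma ((a j + 1) / 2) / 2 := by
    simp_rw [← rpow_two]
    rw [integral_rpow_mul_exp_neg_rpow two_pos (ha j), one_div_mul_eq_div]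
  simp_rw [orthantMonomial_mul_exp_neg_sum_sq]
  rw [volume_pi, ← ofReal_integral_eq_lintegral_ofReal
      (Integrable.fintype_prod fun j => (h_int j).integrable_indicator measurableSet_Ioi)
      (.of_forall fun x => ?_), integral_fintype_prod_eq_prod]
  · simp_rw [integral_indicator measurableSet_Ioi, h_integral]
  · exact Finset.prod_nonneg fun _ _ => indicator_nonneg
      (fun _ hy => mul_nonneg (rpow_nonneg (le_of_lt hy) _) (exp_pos _).le) _

theorem withDensity_orthantMonomial_sum_sq_lt_one (ha : ∀ j, -1 < a j) :
    volume.withDensity (fun x => ENNReal.ofReal (orthantMonomial a x)) {x | ∑ j, x j ^ 2 < 1} =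
      ENNReal.ofReal ((∏ j, Gamma ((a j + 1) / 2) / 2) / Gamma (∑ j, (a j + 1) / 2 + 1)) := by
  set ν := volume.withDensity fun x => ENNReal.ofReal (orthantMonomial a x)
  set s := ∑ j, (a j + 1) / 2
  have hs : 0 ≤ s := Finset.sum_nonneg fun j _ => by linarith [ha j]
  have hg : Measurable fun x : ι → ℝ => ∑ j, x j ^ 2 := by fun_prop
  have h_scale (t : ℝ) (ht : 0 < t) :
      ν {x | ∑ j, x j ^ 2 < t} = ENNReal.ofReal (t ^ s) * ν {x | ∑ j, x j ^ 2 < 1} := by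
    have h_exp : s = (finrank ℝ (ι → ℝ) + ∑ j, a j) / 2 := by
      simp only [s, finrank_fintype_fun_eq_card, ← Finset.sum_div, Finset.sum_add_distrib,
        Finset.sum_const, Finset.card_univ, nsmul_eq_mul, mul_one, add_comm]
    rw [h_exp]
    refine withDensity_measure_lt_eq_rpow_mul volume two_pos
      (measurable_orthantMonomial a).ennreal_ofReal hg (fun r hr x => ?_) (fun r hr x => ?_) ht
    · rw [orthantMonomial_smul a hr, ENNReal.ofReal_mul (rpow_nonneg hr.le _)]
    · simp_rw [rpow_two, Finset.mul_sum, Pi.smul_apply, smul_eq_mul, mul_pow]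
  have h_gauss : ∫⁻ x, ENNReal.ofReal (exp (-∑ j, x j ^ 2)) ∂ν =
      ENNReal.ofReal (∏ j, Gamma ((a j + 1) / 2) / 2) := by
    rw [← lintegral_orthantMonomial_mul_exp_neg_sum_sq a ha,
      lintegral_withDensity_eq_lintegral_mul _ (measurable_orthantMonomial a).ennreal_ofReal
        (by fun_prop)]
    simp_rw [Pi.mul_apply, ← ENNReal.ofReal_mul (orthantMonomial_nonneg a _)]
  have hΓ : 0 < Gamma (s + 1) := Gamma_pos_of_pos (by linarith)
  rw [ENNReal.ofReal_div_of_pos hΓ,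
    ENNReal.eq_div_iff (by simpa using hΓ) ENNReal.ofReal_ne_top, ← h_gauss,
    lintegral_exp_neg_eq_Gamma_mul ν (by linarith) hg
      (fun x => Finset.sum_nonneg fun j _ => sq_nonneg (x j)) h_scale]

end Orthant

/-- The integral of the monomial `∏ x_j ^ α_j` over the positive part of the
open unit ball in `ℝ^m` equals
`(∏ Γ((α_j+1)/2)) / (Γ(∑ (α_j+1)/2) · 2^m · ∑ (α_j+1)/2)`. -/
theorem statement0 (m : ℕ) (hm : 1 ≤ m) (α : Fin m → ℝ) (hα : ∀ j, 0 < α j) :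
    ∫ x in {x : Fin m → ℝ | (∀ j, 0 < x j) ∧ ∑ j, (x j) ^ 2 < 1},
        ∏ j, (x j) ^ (α j)
      = (∏ j, Real.Gamma ((α j + 1) / 2)) /
          (Real.Gamma (∑ j, (α j + 1) / 2) * 2 ^ m * ∑ j, (α j + 1) / 2) := by
  set s := ∑ j, (α j + 1) / 2
  have hΓ (j : Fin m) : 0 < Gamma ((α j + 1) / 2) := Gamma_pos_of_pos (by linarith [hα j])
  have hs : 0 < s :=
    Finset.sum_pos (fun j _ => by linarith [hα j]) ⟨⟨0, hm⟩, Finset.mem_univ _⟩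
  have h_ball : MeasurableSet {x : Fin m → ℝ | ∑ j, x j ^ 2 < 1} :=
    measurableSet_lt (by fun_prop) measurable_const
  have h_orthant : MeasurableSet {x : Fin m → ℝ | ∀ j, 0 < x j} :=
    measurableSet_setOfPred.mpr (by fun_prop)
  have h_set : {x : Fin m → ℝ | (∀ j, 0 < x j) ∧ ∑ j, x j ^ 2 < 1} =
      {x | ∑ j, x j ^ 2 < 1} ∩ {x | ∀ j, 0 < x j} := by
    ext x; exact and_comm
  have h_nonneg : 0 ≤ (∏ j, Gamma ((α j + 1) / 2) / 2) / Gamma (s + 1) :=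
    div_nonneg (Finset.prod_nonneg fun j _ => (div_pos (hΓ j) two_pos).le)
      (Gamma_pos_of_pos (by linarith)).le
  rw [h_set, ← setIntegral_indicator h_orthant, ← orthantMonomial_eq_indicator,
    integral_eq_lintegral_of_nonneg_ae (.of_forall (orthantMonomial_nonneg α))
      (measurable_orthantMonomial α).aestronglyMeasurable,
    ← withDensity_apply _ h_ball,
    withDensity_orthantMonomial_sum_sq_lt_one α fun j => by linarith [hα j],
    ENNReal.toReal_ofReal h_nonneg, Gamma_add_one hs.ne', Finset.prod_div_distrib,
    Finset.prod_const, Finset.card_univ, Fintype.card_fin, div_div]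
  ring_nf
end

section
/- Let m ≥ 1 and let p_1,…,p_m be positive real numbers. Define ω(n) := (∏_{j=1}^m Γ((n_j+1)/p_j)) / (Γ(T(n)) · T(n)) for n ∈ ℕ^m, where T(n) := ∑_{j=1}^m (n_j+1)/p_j. Fix i ∈ {1,…,m} and define λ_i(n) := ω(n)/ω(n−e_i) − ω(n+e_i)/ω(n) when n_i ≥ 1, and λ_i(n) := −ω(n+e_i)/ω(n) when n_i = 0, where e_i is the i-th standard basis vector of ℕ^m. Then λ_i(n) → 0 as ∑_{j=1}^m n_j → ∞. -/
/-!
Write `c = 1 / p_i` and `F t = log Γ(t + c) - log Γ t`. Then `ω(n + e_i) / ω(n) = exp (F x - F y)`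
with `x = (n_i + 1) / p_i` and `y = T(n) + 1`, and `ω(n) / ω(n - e_i)` is the same expression at
`(x - c, y - c)`. Log-convexity of `Γ` makes `F` increasing with
`c log (t - 1) ≤ F t ≤ c log (t + c)`, so `F t → ∞` and `F (t + c) - F t → 0`. If `x` stays
bounded, both ratios are at most `exp (F x₀ - F (y - c)) → 0`; if `x` is large, the two exponents
are nonpositive and differ by `(F y - F (y - c)) - (F x - F (x - c)) → 0`, and `exp` is
`1`-Lipschitz on `(-∞, 0]`.
-/

open Filter Real Set Topology

theorem ConvexOn.slope_le_slope {𝕜 : Type*} [Field 𝕜] [LinearOrder 𝕜] [IsStrictOrderedRing 𝕜]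
    {s : Set 𝕜} {f : 𝕜 → 𝕜} (hf : ConvexOn 𝕜 s f) {a b u v : 𝕜} (ha : a ∈ s) (hb : b ∈ s)
    (hu : u ∈ s) (hv : v ∈ s) (hab : a < b) (huv : u < v) (hau : a ≤ u) (hbv : b ≤ v) :
    slope f a b ≤ slope f u v :=
  calc slope f a b ≤ slope f a v :=
        hf.slope_mono ha ⟨hb, hab.ne'⟩ ⟨hv, (hab.trans_le hbv).ne'⟩ hbv
    _ = slope f v a := slope_comm f a v
    _ ≤ slope f v u := hf.slope_mono hv ⟨ha, (hab.trans_le hbv).ne⟩ ⟨hu, huv.ne⟩ hau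
    _ = slope f u v := slope_comm f v u

theorem Real.abs_exp_sub_exp_le_of_nonpos {u v : ℝ} (hu : u ≤ 0) (hv : v ≤ 0) :
    |exp u - exp v| ≤ |u - v| := by
  wlog hvu : v ≤ u generalizing u v
  · rw [abs_sub_comm, abs_sub_comm u]
    exact this hv hu (le_of_not_ge hvu)
  have h1 : 1 - exp (v - u) ≤ u - v := by linarith [add_one_le_exp (v - u)]
  have h2 : 0 ≤ 1 - exp (v - u) := by linarith [exp_le_one_iff.2 (sub_nonpos.2 hvu)]
  rw [abs_of_nonneg (sub_nonneg.2 (exp_le_exp.2 hvu)), abs_of_nonneg (sub_nonneg.2 hvu)]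
  calc exp u - exp v = exp u * (1 - exp (v - u)) := by rw [mul_sub, ← exp_add]; ring_nf
    _ ≤ 1 * (1 - exp (v - u)) := by gcongr; exact exp_le_one_iff.2 hu
    _ ≤ u - v := by linarith

noncomputable def logGammaShift (c t : ℝ) : ℝ := log (Gamma (t + c)) - log (Gamma t)

section logGammaShift

variable {c : ℝ}

theorem exp_logGammaShift {t : ℝ} (ht : 0 < t) (htc : 0 < t + c) :
    exp (logGammaShift c t) = Gamma (t + c) / Gamma t := by
  rw [logGammaShift, exp_sub, exp_log (Gamma_pos_of_pos htc), exp_log (Gamma_pos_of_pos ht)]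

theorem slope_log_Gamma_add (a b : ℝ) :
    slope (log ∘ Gamma) a (a + b) = logGammaShift b a / b := by
  rw [slope_def_field, add_sub_cancel_left]; rfl

theorem slope_log_Gamma_add_one {t : ℝ} (ht : 0 < t) :
    slope (log ∘ Gamma) t (t + 1) = log t := by
  rw [slope_log_Gamma_add, div_one, logGammaShift, Gamma_add_one ht.ne',
    log_mul ht.ne' (Gamma_pos_of_pos ht).ne', add_sub_cancel_right]

theorem slope_log_Gamma_le_slope {a b u v : ℝ} (ha : 0 < a) (hab : a < b) (huv : u < v)
    (hau : a ≤ u) (hbv : b ≤ v) : slope (log ∘ Gamma) a b ≤ slope (log ∘ Gamma) u v :=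
  convexOn_log_Gamma.slope_le_slope ha (ha.trans hab) (ha.trans_le hau)
    (ha.trans_le hau |>.trans huv) hab huv hau hbv

theorem logGammaShift_le_logGammaShift (hc : 0 < c) {a b : ℝ} (ha : 0 < a) (hab : a ≤ b) :
    logGammaShift c a ≤ logGammaShift c b := by
  rcases hab.eq_or_lt with rfl | hab
  · rfl
  have := slope_log_Gamma_le_slope ha (lt_add_of_pos_right a hc) (lt_add_of_pos_right b hc)
    hab.le (by linarith)
  rwa [slope_log_Gamma_add, slope_log_Gamma_add, div_le_div_iff_of_pos_right hc] at this

theorem mul_log_le_logGammaShift (hc : 0 < c) {t : ℝ} (ht : 0 < t) :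
    c * log t ≤ logGammaShift c (t + 1) := by
  have := slope_log_Gamma_le_slope ht (lt_add_one t) (lt_add_of_pos_right (t + 1) hc)
    (by linarith) (by linarith)
  rwa [slope_log_Gamma_add_one ht, slope_log_Gamma_add, le_div_iff₀ hc, mul_comm] at this

theorem logGammaShift_le_mul_log (hc : 0 < c) {t : ℝ} (ht : 0 < t) :
    logGammaShift c t ≤ c * log (t + c) := by
  have := slope_log_Gamma_le_slope ht (lt_add_of_pos_right t hc) (lt_add_one (t + c))
    (by linarith) (by linarith)
  rwa [slope_log_Gamma_add_one (by linarith), slope_log_Gamma_add, div_le_iff₀ hc, mul_comm] at this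

theorem tendsto_logGammaShift_atTop (hc : 0 < c) : Tendsto (logGammaShift c) atTop atTop := by
  have hlog : Tendsto (fun t => c * log (t - 1)) atTop atTop :=
    (tendsto_log_atTop.comp (tendsto_atTop_add_const_right _ (-1) tendsto_id)).const_mul_atTop hc
  refine tendsto_atTop_mono' _ ?_ hlog
  filter_upwards [eventually_gt_atTop 1] with t ht
  simpa using mul_log_le_logGammaShift hc (sub_pos.2 ht)

theorem tendsto_exp_sub_logGammaShift (hc : 0 < c) (K : ℝ) :
    Tendsto (fun t => exp (K - logGammaShift c t)) atTop (𝓝 0) :=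
  tendsto_exp_atBot.comp (tendsto_atBot_add_const_left _ K
    (tendsto_neg_atTop_atBot.comp (tendsto_logGammaShift_atTop hc)))

theorem logGammaShift_add_sub_le (hc : 0 < c) {t : ℝ} (ht : 1 < t) :
    logGammaShift c (t + c) - logGammaShift c t ≤ c * (2 * c + 1) / (t - 1) := by
  have hupper := logGammaShift_le_mul_log hc (t := t + c) (by linarith)
  have hlower := mul_log_le_logGammaShift hc (t := t - 1) (by linarith)
  have hlog : log (t + c + c) - log (t - 1) ≤ (2 * c + 1) / (t - 1) := by
    rw [← log_div (by linarith) (by linarith)]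
    convert log_le_sub_one_of_pos (x := (t + c + c) / (t - 1)) (by apply div_pos <;> linarith)
      using 1
    rw [div_sub_one (by linarith)]
    ring
  rw [sub_add_cancel] at hlower
  calc logGammaShift c (t + c) - logGammaShift c t ≤ c * (log (t + c + c) - log (t - 1)) := by
        linarith
    _ ≤ c * ((2 * c + 1) / (t - 1)) := by gcongr
    _ = c * (2 * c + 1) / (t - 1) := by ring

theorem tendsto_logGammaShift_add_sub (hc : 0 < c) :
    Tendsto (fun t => logGammaShift c (t + c) - logGammaShift c t) atTop (𝓝 0) := by
  have hbound : Tendsto (fun t => c * (2 * c + 1) / (t - 1)) atTop (𝓝 0) :=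
    tendsto_const_nhds.div_atTop (tendsto_atTop_add_const_right _ (-1) tendsto_id)
  refine tendsto_of_tendsto_of_tendsto_of_le_of_le' tendsto_const_nhds hbound ?_ ?_
  · filter_upwards [eventually_gt_atTop 0] with t ht
    exact sub_nonneg.2 (logGammaShift_le_logGammaShift hc ht (by linarith))
  · filter_upwards [eventually_gt_atTop 1] with t ht
    exact logGammaShift_add_sub_le hc ht

theorem abs_exp_logGammaShift_sub_sub_le (hc : 0 < c) {x y : ℝ} (hx : c < x) (hxy : x ≤ y) :
    |exp (logGammaShift c (x - c) - logGammaShift c (y - c))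
      - exp (logGammaShift c x - logGammaShift c y)| ≤
    |(logGammaShift c y - logGammaShift c (y - c)) - (logGammaShift c x - logGammaShift c (x - c))|
    := by
  have hu := logGammaShift_le_logGammaShift hc (sub_pos.2 hx) (sub_le_sub_right hxy c)
  have hv := logGammaShift_le_logGammaShift hc (hc.trans hx) hxy
  refine (abs_exp_sub_exp_le_of_nonpos (sub_nonpos.2 hu) (sub_nonpos.2 hv)).trans_eq ?_
  ring_nf

theorem tendsto_exp_logGammaShift_sub_sub (hc : 0 < c) {α : Type*} {l : Filter α}
    {x y : α → ℝ} (hx : ∀ᶠ a in l, c < x a) (hxy : ∀ᶠ a in l, x a ≤ y a)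
    (hy : Tendsto y l atTop) :
    Tendsto (fun a => exp (logGammaShift c (x a - c) - logGammaShift c (y a - c))
      - exp (logGammaShift c (x a) - logGammaShift c (y a))) l (𝓝 0) := by
  set F := logGammaShift c
  have hF : ∀ ⦃a b⦄, 0 < a → a ≤ b → F a ≤ F b := fun _ _ => logGammaShift_le_logGammaShift hc
  rw [Metric.tendsto_nhds]
  intro ε hε
  obtain ⟨t₀, ht₀⟩ := eventually_atTop.1 <|
    ((tendsto_order.1 (tendsto_logGammaShift_add_sub hc)).2 _ (half_pos hε)).and
      (eventually_gt_atTop 0)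
  have ht₀pos : 0 < t₀ := (ht₀ t₀ le_rfl).2
  have hψ : ∀ t, t₀ ≤ t → |F (t + c) - F t| < ε / 2 := fun t ht => by
    rw [abs_of_nonneg (sub_nonneg.2 (hF (ht₀pos.trans_le ht) (by linarith)))]
    exact (ht₀ t ht).1
  have hy' : Tendsto (fun a => y a - c) l atTop := tendsto_atTop_add_const_right _ (-c) hy
  filter_upwards [hx, hxy, hy'.eventually_ge_atTop t₀,
    ((tendsto_exp_sub_logGammaShift hc (F (t₀ + c))).comp hy').eventually
      (gt_mem_nhds (half_pos hε))] with a hxa hxya hya htail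
  simp only [Function.comp_apply] at htail
  rw [dist_zero_right, norm_eq_abs]
  rcases le_or_gt t₀ (x a - c) with hlarge | hsmall
  · have hψx := hψ _ hlarge
    have hψy := hψ _ (hlarge.trans (by linarith : x a - c ≤ y a - c))
    rw [sub_add_cancel] at hψx hψy
    refine (abs_exp_logGammaShift_sub_sub_le hc hxa hxya).trans_lt ?_
    rw [abs_lt] at hψx hψy ⊢
    constructor <;> linarith
  · -- both terms are at most `exp (F (t₀ + c) - F (y - c))`, which is small
    have hu : exp (F (x a - c) - F (y a - c)) < ε / 2 := by
      refine lt_of_le_of_lt (exp_le_exp.2 ?_) htail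
      linarith [hF (sub_pos.2 hxa) (by linarith : x a - c ≤ t₀ + c)]
    have hv : exp (F (x a) - F (y a)) < ε / 2 := by
      refine lt_of_le_of_lt (exp_le_exp.2 ?_) htail
      linarith [hF (by linarith) (by linarith : y a - c ≤ y a),
        hF (by linarith) (by linarith : x a ≤ t₀ + c)]
    rw [abs_lt]
    constructor <;> linarith [exp_pos (F (x a - c) - F (y a - c)), exp_pos (F (x a) - F (y a))]

end logGammaShift

@[to_additive]
theorem Fintype.prod_apply_update {ι α M : Type*} [Fintype ι] [DecidableEq ι] [CommMonoid M]
    (f : ι → α → M) (n : ι → α) (i : ι) (v : α) :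
    ∏ j, f j (Function.update n i v j) = f i v * ∏ j ∈ Finset.univ.erase i, f j (n j) := by
  simp_rw [Function.apply_update f n i v]
  rw [Finset.prod_update_of_mem (Finset.mem_univ i), Finset.sdiff_singleton_eq_erase]

noncomputable def eggDegree {ι : Type*} [Fintype ι] (p : ι → ℝ) (n : ι → ℕ) : ℝ :=
  ∑ j, ((n j : ℝ) + 1) / p j

noncomputable def eggWeight {ι : Type*} [Fintype ι] (p : ι → ℝ) (n : ι → ℕ) : ℝ :=
  (∏ j, Gamma (((n j : ℝ) + 1) / p j)) / (Gamma (eggDegree p n) * eggDegree p n)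

section egg

variable {ι : Type*} [Fintype ι] {p : ι → ℝ}

theorem tendsto_eggDegree (hp : ∀ j, 0 < p j) :
    Tendsto (eggDegree p) (comap (fun n : ι → ℕ => ∑ j, n j) atTop) atTop := by
  have hP : 0 < 1 + ∑ j, p j := by
    linarith [Finset.sum_nonneg fun j (_ : j ∈ Finset.univ) => (hp j).le]
  refine tendsto_atTop_mono (fun n => ?_)
    ((tendsto_natCast_atTop_atTop.comp tendsto_comap).atTop_div_const hP)
  simp only [Function.comp_apply, Nat.cast_sum, Finset.sum_div, eggDegree]
  refine Finset.sum_le_sum fun j _ => div_le_div₀ (by positivity) (by linarith) (hp j) ?_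
  linarith [Finset.single_le_sum (fun k _ => (hp k).le) (Finset.mem_univ j)]

theorem div_le_eggDegree (hp : ∀ j, 0 < p j) (n : ι → ℕ) (i : ι) :
    ((n i : ℝ) + 1) / p i ≤ eggDegree p n :=
  Finset.single_le_sum (f := fun j => ((n j : ℝ) + 1) / p j)
    (fun j _ => (div_pos (by positivity) (hp j)).le) (Finset.mem_univ i)

variable [DecidableEq ι]

theorem eggDegree_update (n : ι → ℕ) (i : ι) (v : ℕ) :
    eggDegree p (Function.update n i v) = eggDegree p n + ((v : ℝ) - n i) / p i := by
  rw [eggDegree, eggDegree, Fintype.sum_apply_update (fun j (k : ℕ) => ((k : ℝ) + 1) / p j),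
    ← Finset.add_sum_erase _ _ (Finset.mem_univ i)]
  ring

theorem eggWeight_update_succ_div (hp : ∀ j, 0 < p j) (n : ι → ℕ) (i : ι) (v : ℕ) :
    eggWeight p (Function.update n i (v + 1)) / eggWeight p (Function.update n i v) =
      exp (logGammaShift (p i)⁻¹ (((v : ℝ) + 1) / p i) -
        logGammaShift (p i)⁻¹ (eggDegree p (Function.update n i v) + 1)) := by
  have hdeg : eggDegree p (Function.update n i (v + 1)) =
      eggDegree p (Function.update n i v) + (p i)⁻¹ := by
    simpa [div_eq_mul_inv] using eggDegree_update (Function.update n i v) i (v + 1)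
  have hsucc : (((v + 1 : ℕ) : ℝ) + 1) / p i = ((v : ℝ) + 1) / p i + (p i)⁻¹ := by
    push_cast; ring
  have hprod := Fintype.prod_apply_update (fun j (k : ℕ) => Gamma (((k : ℝ) + 1) / p j)) n i
  rw [eggWeight, eggWeight, hdeg, hprod, hprod, hsucc]
  set c := (p i)⁻¹
  set a := ((v : ℝ) + 1) / p i
  set T := eggDegree p (Function.update n i v)
  set Q := ∏ j ∈ Finset.univ.erase i, Gamma (((n j : ℝ) + 1) / p j)
  have hc : 0 < c := inv_pos.2 (hp i)
  have ha : 0 < a := div_pos (by positivity) (hp i)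
  have hT : 0 < T :=
    Finset.sum_pos (fun j _ => div_pos (by positivity) (hp j)) ⟨i, Finset.mem_univ i⟩
  have hQ : 0 < Q := Finset.prod_pos fun j _ => Gamma_pos_of_pos (div_pos (by positivity) (hp j))
  rw [exp_sub, exp_logGammaShift ha (by positivity),
    exp_logGammaShift (by positivity) (by positivity), add_right_comm T,
    Gamma_add_one hT.ne', Gamma_add_one (by positivity : T + c ≠ 0)]
  have := Gamma_pos_of_pos ha
  have := Gamma_pos_of_pos (by positivity : 0 < a + c)
  have := Gamma_pos_of_pos hT
  have := Gamma_pos_of_pos (by positivity : 0 < T + c)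
  field_simp

theorem eggWeight_update_succ_div_self (hp : ∀ j, 0 < p j) (n : ι → ℕ) (i : ι) :
    eggWeight p (Function.update n i (n i + 1)) / eggWeight p n =
      exp (logGammaShift (p i)⁻¹ (((n i : ℝ) + 1) / p i) -
        logGammaShift (p i)⁻¹ (eggDegree p n + 1)) := by
  simpa only [Function.update_eq_self] using eggWeight_update_succ_div hp n i (n i)

theorem eggWeight_div_update_pred (hp : ∀ j, 0 < p j) (n : ι → ℕ) (i : ι) (hn : n i ≠ 0) :
    eggWeight p n / eggWeight p (Function.update n i (n i - 1)) =
      exp (logGammaShift (p i)⁻¹ (((n i : ℝ) + 1) / p i - (p i)⁻¹) -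
        logGammaShift (p i)⁻¹ (eggDegree p n + 1 - (p i)⁻¹)) := by
  have hcast : ((n i - 1 : ℕ) : ℝ) = n i - 1 := by
    rw [Nat.cast_sub (Nat.one_le_iff_ne_zero.2 hn), Nat.cast_one]
  have := eggWeight_update_succ_div hp n i (n i - 1)
  rw [Nat.sub_add_cancel (Nat.one_le_iff_ne_zero.2 hn), Function.update_eq_self,
    eggDegree_update, hcast] at this
  rw [this]
  congr 3 <;> ring

end egg

theorem statement8_general (m : ℕ) (p : Fin m → ℝ) (hp : ∀ j, 0 < p j)
    (ω : (Fin m → ℕ) → ℝ)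
    (hω : ∀ n : Fin m → ℕ,
      ω n = (∏ j, Real.Gamma (((n j : ℝ) + 1) / p j)) /
        (Real.Gamma (∑ j, ((n j : ℝ) + 1) / p j) * ∑ j, ((n j : ℝ) + 1) / p j))
    (i : Fin m)
    (lam : (Fin m → ℕ) → ℝ)
    (hlam0 : ∀ n : Fin m → ℕ, n i = 0 →
      lam n = -(ω (Function.update n i (n i + 1)) / ω n))
    (hlam1 : ∀ n : Fin m → ℕ, 1 ≤ n i →
      lam n = ω n / ω (Function.update n i (n i - 1))
        - ω (Function.update n i (n i + 1)) / ω n) :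
    Tendsto lam (Filter.comap (fun n : Fin m → ℕ => ∑ j, n j) Filter.atTop)
      (nhds 0) := by
  obtain rfl : ω = eggWeight p := funext hω
  set c := (p i)⁻¹
  set F := logGammaShift c
  set x : (Fin m → ℕ) → ℝ := fun n => ((n i : ℝ) + 1) / p i
  set y : (Fin m → ℕ) → ℝ := fun n => eggDegree p n + 1
  have hc : 0 < c := inv_pos.2 (hp i)
  have hy : Tendsto y (comap (fun n : Fin m → ℕ => ∑ j, n j) atTop) atTop :=
    tendsto_atTop_add_const_right _ 1 (tendsto_eggDegree hp)
  have hlam : lam = fun n => if n i = 0 then -exp (F (x n) - F (y n))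
      else exp (F (x n - c) - F (y n - c)) - exp (F (x n) - F (y n)) := by
    funext n
    split_ifs with hn
    · rw [hlam0 n hn, eggWeight_update_succ_div_self hp]
    · rw [hlam1 n (Nat.one_le_iff_ne_zero.2 hn), eggWeight_update_succ_div_self hp,
        eggWeight_div_update_pred hp n i hn]
  rw [hlam]
  refine Tendsto.if ?_ ?_
  · refine Tendsto.congr' (f₁ := fun n => -exp (F c - F (y n)))
      (eventually_inf_principal.2 (Eventually.of_forall fun n hn => ?_)) ?_
    · simp [x, c, hn.out]
    · simpa using ((tendsto_exp_sub_logGammaShift hc (F c)).comp (hy.mono_left inf_le_left)).neg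
  · refine tendsto_exp_logGammaShift_sub_sub hc
      (eventually_inf_principal.2 (Eventually.of_forall fun n hn => ?_))
      (Eventually.of_forall fun n => ?_) (hy.mono_left inf_le_left)
    · have hn' : (1 : ℝ) < n i + 1 := by simpa using Nat.pos_of_ne_zero hn.out
      simpa only [c, x, one_div] using div_lt_div_of_pos_right hn' (hp i)
    · linarith [div_le_eggDegree hp n i]

/-- The diagonal entries `λ_i(n)` of the self-commutator `[M_{z_i}, M_{z_i}^*]` of
the Bergman shift on the egg domain, expressed through the normalized monomial
norms `ω(n) = (∏ Γ((n_j+1)/p_j)) / (Γ(T(n))·T(n))`, tend to `0` as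
`∑ n_j → ∞`. -/
theorem statement8 (m : ℕ) (hm : 1 ≤ m) (p : Fin m → ℝ) (hp : ∀ j, 0 < p j)
    (ω : (Fin m → ℕ) → ℝ)
    (hω : ∀ n : Fin m → ℕ,
      ω n = (∏ j, Real.Gamma (((n j : ℝ) + 1) / p j)) /
        (Real.Gamma (∑ j, ((n j : ℝ) + 1) / p j) * ∑ j, ((n j : ℝ) + 1) / p j))
    (i : Fin m)
    (lam : (Fin m → ℕ) → ℝ)
    (hlam0 : ∀ n : Fin m → ℕ, n i = 0 →
      lam n = -(ω (Function.update n i (n i + 1)) / ω n))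
    (hlam1 : ∀ n : Fin m → ℕ, 1 ≤ n i →
      lam n = ω n / ω (Function.update n i (n i - 1))
        - ω (Function.update n i (n i + 1)) / ω n) :
    Tendsto lam (Filter.comap (fun n : Fin m → ℕ => ∑ j, n j) Filter.atTop)
      (nhds 0) :=
  statement8_general m p hp ω hω i lam hlam0 hlam1
end

section
/- Let m ≥ 1, let p_1,…,p_m be positive real numbers, and set ω₁(α) := ∫_{Ω₁} ∏_{j=1}^m |z_j|^{2α_j} dV(z) for α ∈ ℕ^m. Fix i ∈ {1,…,m} and b ∈ ℕ. Then the ratio ω₁(n+e_i)/ω₁(n) tends to 0 as ∑_{j=1}^m n_j → ∞ over multi-indices n ∈ ℕ^m with n_i = b, where e_i is the i-th standard basis vector. -/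
/-!
On the egg domain `Ω` we have `|z_i|² ≤ 1`, so for every `ε > 0`
`ω(n + e_i) ≤ ε ω(n) + ∫_{Ω ∩ {|z_i|² > ε}} |z^n|²`.
On `{|z_i|² > ε}` the `i`-th term of the defining sum is at least `ε^{p_i}`, so this part of `Ω`
lies in the image `L(Ω)` of a diagonal scaling `L` that stretches `z_i` by some `S` and shrinks
every other coordinate by a fixed `σ < 1`. Changing variables, the last integral is at most
`|det L| S^{2n_i} σ^{2 ∑_{j ≠ i} n_j} ω(n)`, which is `o(ω(n))` when `n_i = b` and `∑ n_j → ∞`.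
-/

open MeasureTheory Filter Topology

theorem setIntegral_mul_le_add_setIntegral_inter {X : Type*} [MeasurableSpace X] {μ : Measure X}
    {s : Set X} {f h : X → ℝ} (hs : MeasurableSet s) (hf : IntegrableOn f s μ)
    (hf0 : ∀ x ∈ s, 0 ≤ f x) (hh : Measurable h) (hh1 : ∀ x ∈ s, |h x| ≤ 1) {ε : ℝ}
    (hε : 0 ≤ ε) :
    ∫ x in s, h x * f x ∂μ ≤ ε * (∫ x in s, f x ∂μ) + ∫ x in s ∩ {x | ε < h x}, f x ∂μ := by
  have hB : MeasurableSet {x | ε < h x} := measurableSet_lt measurable_const hh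
  have hhf : IntegrableOn (fun x => h x * f x) s μ :=
    hf.bdd_mul hh.aestronglyMeasurable ((ae_restrict_iff' hs).2 (ae_of_all _ hh1))
  calc ∫ x in s, h x * f x ∂μ
      ≤ ∫ x in s, (ε * f x + {x | ε < h x}.indicator f x) ∂μ := by
        refine setIntegral_mono_on hhf ((hf.const_mul ε).add (hf.indicator hB)) hs fun x hx => ?_
        have hhx : h x ≤ 1 := (le_abs_self _).trans (hh1 x hx)
        by_cases hεx : ε < h x
        · rw [Set.indicator_of_mem (show x ∈ {x | ε < h x} from hεx)]
          nlinarith [hf0 x hx]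
        · rw [Set.indicator_of_notMem (show x ∉ {x | ε < h x} from hεx)]
          nlinarith [hf0 x hx, not_lt.1 hεx]
    _ = ε * (∫ x in s, f x ∂μ) + ∫ x in s ∩ {x | ε < h x}, f x ∂μ := by
        rw [integral_add (hf.const_mul ε) (hf.indicator hB), integral_const_mul,
          setIntegral_indicator hB]

theorem setIntegral_image_continuousLinearMap {E F : Type*} [NormedAddCommGroup E]
    [NormedSpace ℝ E] [FiniteDimensional ℝ E] [MeasurableSpace E] [BorelSpace E]
    [NormedAddCommGroup F] [NormedSpace ℝ F] (μ : Measure E) [μ.IsAddHaarMeasure]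
    {L : E →L[ℝ] E} (hL : Function.Injective L) {s : Set E} (hs : MeasurableSet s) (f : E → F) :
    ∫ x in L '' s, f x ∂μ = |L.det| • ∫ x in s, f (L x) ∂μ := by
  rw [integral_image_eq_integral_abs_det_fderiv_smul μ hs
    (fun x _ => L.hasFDerivAt.hasFDerivWithinAt) hL.injOn, integral_smul]

theorem sum_mul_lt_one_of_lt {ι : Type*} [Fintype ι] {x w : ι → ℝ} {i : ι} {t : ℝ}
    (ht : 0 ≤ t) (hx : ∀ j, 0 ≤ x j) (hsum : ∑ j, x j < 1) (hxi : t < x i) (hwi : w i ≤ t)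
    (hw : ∀ j, j ≠ i → w j ≤ 1 + t) : ∑ j, w j * x j < 1 := by
  classical
  rw [← Finset.add_sum_erase _ _ (Finset.mem_univ i)] at hsum ⊢
  have hrest : ∑ j ∈ Finset.univ.erase i, w j * x j ≤ (1 + t) * ∑ j ∈ Finset.univ.erase i, x j := by
    rw [Finset.mul_sum]
    exact Finset.sum_le_sum fun j hj =>
      mul_le_mul_of_nonneg_right (hw j (Finset.ne_of_mem_erase hj)) (hx j)
  have hrest' : (1 + t) * ∑ j ∈ Finset.univ.erase i, x j ≤ (1 + t) * (1 - x i) :=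
    mul_le_mul_of_nonneg_left (by linarith) (by linarith)
  nlinarith [mul_le_mul_of_nonneg_right hwi (hx i)]

section EggDomain

variable {ι : Type*}

noncomputable def diagScale (s : ι → ℝ) : (ι → ℂ) →L[ℝ] (ι → ℂ) :=
  ContinuousLinearMap.pi fun j => s j • ContinuousLinearMap.proj j

@[simp]
theorem diagScale_apply (s : ι → ℝ) (z : ι → ℂ) (j : ι) : diagScale s z j = s j • z j := rfl

theorem diagScale_injective {s : ι → ℝ} (hs : ∀ j, s j ≠ 0) : Function.Injective (diagScale s) :=
  fun _ _ h => funext fun j => smul_right_injective ℂ (hs j) (congrFun h j)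

variable [Fintype ι]

def eggDomain (p : ι → ℝ) : Set (ι → ℂ) := {z | ∑ j, ‖z j‖ ^ (2 * p j) < 1}

noncomputable def monomialWeight (α : ι → ℕ) (z : ι → ℂ) : ℝ := ∏ j, ‖z j‖ ^ (2 * α j)

theorem monomialWeight_nonneg (α : ι → ℕ) (z : ι → ℂ) : 0 ≤ monomialWeight α z := by
  unfold monomialWeight; positivity

theorem continuous_monomialWeight (α : ι → ℕ) : Continuous (monomialWeight α) := by
  unfold monomialWeight; fun_prop

theorem monomialWeight_update_succ [DecidableEq ι] (α : ι → ℕ) (i : ι) (z : ι → ℂ) :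
    monomialWeight (Function.update α i (α i + 1)) z = ‖z i‖ ^ 2 * monomialWeight α z := by
  simp only [monomialWeight]
  rw [← Finset.mul_prod_erase _ _ (Finset.mem_univ i),
    ← Finset.mul_prod_erase _ (fun j => ‖z j‖ ^ (2 * α j)) (Finset.mem_univ i),
    Finset.prod_congr rfl fun j hj => by rw [Function.update_of_ne (Finset.ne_of_mem_erase hj)]]
  rw [Function.update_self]
  ring

theorem monomialWeight_diagScale (α : ι → ℕ) (s : ι → ℝ) (z : ι → ℂ) :
    monomialWeight α (diagScale s z) = (∏ j, |s j| ^ (2 * α j)) * monomialWeight α z := by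
  simp only [monomialWeight, diagScale_apply, norm_smul, Real.norm_eq_abs, mul_pow,
    Finset.prod_mul_distrib]

theorem integrableOn_monomialWeight (α : ι → ℕ) {S : Set (ι → ℂ)} (hS : Bornology.IsBounded S) :
    IntegrableOn (monomialWeight α) S :=
  ((continuous_monomialWeight α).locallyIntegrable.integrableOn_isCompact
    hS.isCompact_closure).mono_set subset_closure

theorem isOpen_eggDomain {p : ι → ℝ} (hp : ∀ j, 0 ≤ p j) : IsOpen (eggDomain p) := by
  refine isOpen_lt (continuous_finsetSum _ fun j _ => ?_) continuous_const
  exact (Real.continuous_rpow_const (by linarith [hp j])).comp (by fun_prop)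

theorem norm_lt_one_of_mem_eggDomain {p : ι → ℝ} {z : ι → ℂ} (hz : z ∈ eggDomain p) {j : ι}
    (hp : 0 < p j) : ‖z j‖ < 1 := by
  have hzj : ‖z j‖ ^ (2 * p j) < 1 :=
    (Finset.single_le_sum (f := fun k => ‖z k‖ ^ (2 * p k)) (fun k _ => by positivity)
      (Finset.mem_univ j)).trans_lt hz
  by_contra! h
  exact hzj.not_ge (Real.one_le_rpow h (by linarith))

theorem isBounded_eggDomain {p : ι → ℝ} (hp : ∀ j, 0 < p j) :
    Bornology.IsBounded (eggDomain p) := by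
  refine (Metric.isBounded_ball (x := (0 : ι → ℂ)) (r := 1)).subset fun z hz => ?_
  rw [mem_ball_zero_iff, pi_norm_lt_iff one_pos]
  exact fun j => norm_lt_one_of_mem_eggDomain hz (hp j)

theorem zero_mem_eggDomain {p : ι → ℝ} (hp : ∀ j, 0 < p j) : (0 : ι → ℂ) ∈ eggDomain p := by
  simp [eggDomain, Real.zero_rpow, (hp _).ne']

theorem setIntegral_monomialWeight_pos {p : ι → ℝ} (hp : ∀ j, 0 < p j) (α : ι → ℕ) :
    0 < ∫ z in eggDomain p, monomialWeight α z := by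
  have hopen := isOpen_eggDomain fun j => (hp j).le
  rw [setIntegral_pos_iff_support_of_nonneg_ae (ae_of_all _ (monomialWeight_nonneg α))
    (integrableOn_monomialWeight α (isBounded_eggDomain hp))]
  refine ((continuous_monomialWeight α).isOpen_support.inter hopen).measure_pos _ ?_
  obtain ⟨r, hr, hball⟩ := Metric.isOpen_iff.1 hopen 0 (zero_mem_eggDomain hp)
  have hr2 : ‖((r / 2 : ℝ) : ℂ)‖ = r / 2 := by simp [abs_of_pos hr]
  refine ⟨fun _ => ((r / 2 : ℝ) : ℂ), ?_, hball ?_⟩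
  · refine (Finset.prod_pos fun j _ => ?_).ne'
    rw [hr2]; positivity
  · rw [mem_ball_zero_iff, pi_norm_lt_iff hr]
    intro j; rw [hr2]; linarith

theorem mem_diagScale_image_eggDomain {p : ι → ℝ} {s : ι → ℝ} (hs : ∀ j, 0 < s j) {z : ι → ℂ}
    (hz : ∑ j, s j ^ (-(2 * p j)) * ‖z j‖ ^ (2 * p j) < 1) :
    z ∈ diagScale s '' eggDomain p := by
  refine ⟨diagScale s⁻¹ z, ?_, funext fun j => smul_inv_smul₀ (hs j).ne' (z j)⟩
  change ∑ j, ‖diagScale s⁻¹ z j‖ ^ (2 * p j) < 1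
  convert hz using 2 with j
  rw [diagScale_apply, norm_smul, Pi.inv_apply, Real.norm_eq_abs, abs_inv, abs_of_pos (hs j),
    Real.mul_rpow (inv_nonneg.2 (hs j).le) (norm_nonneg _), Real.inv_rpow (hs j).le,
    Real.rpow_neg (hs j).le]

theorem prod_update_const_pow {M : Type*} [CommMonoid M] [DecidableEq ι] (i : ι) (x y : M)
    (n : ι → ℕ) :
    ∏ j, Function.update (fun _ => y) i x j ^ n j =
      x ^ n i * y ^ ∑ j ∈ Finset.univ.erase i, n j := by
  rw [← Finset.mul_prod_erase _ _ (Finset.mem_univ i), Function.update_self,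
    Finset.prod_congr rfl fun j hj => by rw [Function.update_of_ne (Finset.ne_of_mem_erase hj)],
    Finset.prod_pow_eq_pow_sum]

theorem tendsto_sum_erase_atTop [DecidableEq ι] (i : ι) (b : ℕ) :
    Tendsto (fun α : ι → ℕ => ∑ j ∈ Finset.univ.erase i, α j)
      (comap (fun α : ι → ℕ => ∑ j, α j) atTop ⊓ 𝓟 {α | α i = b}) atTop := by
  rw [tendsto_atTop]
  intro N
  filter_upwards [mem_inf_of_left (preimage_mem_comap (Ici_mem_atTop (N + b))),
    mem_inf_of_right (mem_principal_self _)] with α hα hαi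
  rw [Set.mem_preimage, Set.mem_Ici, ← Finset.add_sum_erase _ _ (Finset.mem_univ i)] at hα
  omega

theorem exists_rpow_neg_le {p : ι → ℝ} (hp : ∀ j, 0 < p j) (i : ι) {t : ℝ} (ht : 0 < t) :
    ∃ S σ : ℝ, 0 < S ∧ 0 < σ ∧ σ < 1 ∧ S ^ (-(2 * p i)) ≤ t ∧ ∀ j, σ ^ (-(2 * p j)) ≤ 1 + t := by
  obtain ⟨S, hSi, hS⟩ := (((tendsto_rpow_neg_atTop (y := 2 * p i) (by linarith [hp i])).eventually
    (ge_mem_nhds ht)).and (eventually_gt_atTop 0)).exists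
  have hσ : ∀ᶠ σ in 𝓝[<] (1 : ℝ), ∀ j, σ ^ (-(2 * p j)) ≤ 1 + t := by
    refine eventually_all.2 fun j => nhdsWithin_le_nhds ?_
    have := (Real.continuousAt_rpow_const 1 (-(2 * p j)) (Or.inl one_ne_zero)).tendsto
    rw [Real.one_rpow] at this
    exact this.eventually (ge_mem_nhds (by linarith))
  obtain ⟨σ, hσj, hσ0, hσ1⟩ := (hσ.and (((eventually_gt_nhds one_pos).filter_mono
    nhdsWithin_le_nhds).and self_mem_nhdsWithin)).exists
  exact ⟨S, σ, hS, hσ0, hσ1, hSi, hσj⟩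

theorem setIntegral_monomialWeight_update_le [DecidableEq ι] {p : ι → ℝ} (hp : ∀ j, 0 < p j)
    {i : ι} {ε : ℝ} (hε : 0 ≤ ε) {s : ι → ℝ} (hs : ∀ j, 0 < s j)
    (hsi : s i ^ (-(2 * p i)) ≤ ε ^ p i) (hsj : ∀ j, j ≠ i → s j ^ (-(2 * p j)) ≤ 1 + ε ^ p i)
    (α : ι → ℕ) :
    ∫ z in eggDomain p, monomialWeight (Function.update α i (α i + 1)) z ≤
      (ε + |(diagScale s).det| * ∏ j, s j ^ (2 * α j)) *
        ∫ z in eggDomain p, monomialWeight α z := by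
  have hΩ : MeasurableSet (eggDomain p) := (isOpen_eggDomain fun j => (hp j).le).measurableSet
  have hint := integrableOn_monomialWeight α (isBounded_eggDomain hp)
  have hsub : eggDomain p ∩ {z | ε < ‖z i‖ ^ 2} ⊆ diagScale s '' eggDomain p := by
    rintro z ⟨hz, hzi⟩
    refine mem_diagScale_image_eggDomain hs (sum_mul_lt_one_of_lt (by positivity)
      (fun j => by positivity) hz ?_ hsi hsj)
    rw [Real.rpow_mul (norm_nonneg _), Real.rpow_two]
    exact Real.rpow_lt_rpow hε hzi (hp i)
  calc ∫ z in eggDomain p, monomialWeight (Function.update α i (α i + 1)) z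
      = ∫ z in eggDomain p, ‖z i‖ ^ 2 * monomialWeight α z := by
        simp_rw [monomialWeight_update_succ]
    _ ≤ ε * (∫ z in eggDomain p, monomialWeight α z) +
          ∫ z in eggDomain p ∩ {z | ε < ‖z i‖ ^ 2}, monomialWeight α z := by
        refine setIntegral_mul_le_add_setIntegral_inter (h := fun z => ‖z i‖ ^ 2) hΩ hint
          (fun z _ => monomialWeight_nonneg α z) (by fun_prop) (fun z hz => ?_) hε
        rw [abs_of_nonneg (by positivity)]
        exact pow_le_one₀ (norm_nonneg _) (norm_lt_one_of_mem_eggDomain hz (hp i)).le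
    _ ≤ ε * (∫ z in eggDomain p, monomialWeight α z) +
          ∫ z in diagScale s '' eggDomain p, monomialWeight α z :=
        add_le_add_right (setIntegral_mono_set (integrableOn_monomialWeight α
          ((diagScale s).lipschitz.isBounded_image (isBounded_eggDomain hp)))
          (ae_of_all _ (monomialWeight_nonneg α)) hsub.eventuallyLE) _
    _ = (ε + |(diagScale s).det| * ∏ j, s j ^ (2 * α j)) *
          ∫ z in eggDomain p, monomialWeight α z := by
        rw [setIntegral_image_continuousLinearMap volume
          (diagScale_injective fun j => (hs j).ne') hΩ]
        simp_rw [monomialWeight_diagScale, abs_of_pos (hs _)]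
        rw [integral_const_mul, smul_eq_mul, add_mul, mul_assoc]

theorem eventually_setIntegral_monomialWeight_update_lt [DecidableEq ι] {p : ι → ℝ}
    (hp : ∀ j, 0 < p j) (i : ι) (b : ℕ) {ε : ℝ} (hε : 0 < ε) :
    ∀ᶠ α in comap (fun α : ι → ℕ => ∑ j, α j) atTop ⊓ 𝓟 {α | α i = b},
      ∫ z in eggDomain p, monomialWeight (Function.update α i (α i + 1)) z <
        ε * ∫ z in eggDomain p, monomialWeight α z := by
  obtain ⟨S, σ, hS, hσ0, hσ1, hSi, hσj⟩ :=
    exists_rpow_neg_le hp i (Real.rpow_pos_of_pos (half_pos hε) (p i))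
  set s := Function.update (fun _ => σ) i S
  have hs : ∀ j, 0 < s j := by
    intro j
    rcases eq_or_ne j i with rfl | hj
    · simpa [s] using hS
    · simpa [s, hj] using hσ0
  have hbound := setIntegral_monomialWeight_update_le (i := i) hp (half_pos hε).le hs
    (by simpa [s] using hSi) (fun j hj => by simpa [s, hj] using hσj j)
  set C := |(diagScale s).det| * S ^ (2 * b)
  have hsmall : ∀ᶠ α in comap (fun α : ι → ℕ => ∑ j, α j) atTop ⊓ 𝓟 {α | α i = b},
      C * (σ ^ 2) ^ (∑ j ∈ Finset.univ.erase i, α j) < ε / 2 := by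
    have := ((tendsto_pow_atTop_nhds_zero_of_lt_one (sq_nonneg σ) (by nlinarith)).comp
      (tendsto_sum_erase_atTop i b)).const_mul C
    rw [mul_zero] at this
    exact this.eventually (gt_mem_nhds (half_pos hε))
  filter_upwards [hsmall, mem_inf_of_right (mem_principal_self _)] with α hα hαi
  calc ∫ z in eggDomain p, monomialWeight (Function.update α i (α i + 1)) z
      ≤ (ε / 2 + |(diagScale s).det| * ∏ j, s j ^ (2 * α j)) *
          ∫ z in eggDomain p, monomialWeight α z := hbound α
    _ = (ε / 2 + C * (σ ^ 2) ^ (∑ j ∈ Finset.univ.erase i, α j)) *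
          ∫ z in eggDomain p, monomialWeight α z := by
        rw [prod_update_const_pow, hαi, ← Finset.mul_sum, pow_mul σ, mul_assoc]
    _ < ε * ∫ z in eggDomain p, monomialWeight α z :=
        mul_lt_mul_of_pos_right (by linarith) (setIntegral_monomialWeight_pos hp α)

end EggDomain

theorem statement9_general (m : ℕ) (p : Fin m → ℝ) (hp : ∀ j, 0 < p j)
    (ω₁ : (Fin m → ℕ) → ℝ)
    (hω₁ : ∀ α : Fin m → ℕ,
      ω₁ α = ∫ z in {z : Fin m → ℂ | ∑ j, ‖z j‖ ^ (2 * p j) < 1},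
        ∏ j, ‖z j‖ ^ (2 * α j))
    (i : Fin m) (b : ℕ) :
    Tendsto (fun n : Fin m → ℕ => ω₁ (Function.update n i (n i + 1)) / ω₁ n)
      (Filter.comap (fun n : Fin m → ℕ => ∑ j, n j) Filter.atTop ⊓
        Filter.principal {n : Fin m → ℕ | n i = b})
      (nhds 0) := by
  have hω : ∀ α, ω₁ α = ∫ z in eggDomain p, monomialWeight α z := hω₁
  simp_rw [hω]
  have hω_nonneg : ∀ α, 0 ≤ ∫ z in eggDomain p, monomialWeight α z :=
    fun α => integral_nonneg (monomialWeight_nonneg α)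
  refine tendsto_order.2 ⟨fun a ha => Eventually.of_forall fun α =>
    ha.trans_le (div_nonneg (hω_nonneg _) (hω_nonneg α)), fun ε hε => ?_⟩
  filter_upwards [eventually_setIntegral_monomialWeight_update_lt hp i b hε] with α hα
  exact (div_lt_iff₀ (setIntegral_monomialWeight_pos hp α)).2 hα

/-- For the monomial norms `ω₁(α) = ∫_{Ω₁} ∏ |z_j|^(2α_j) dV` on the egg domain
`Ω₁ = {z ∈ ℂ^m : ∑ |z_j|^(2 p_j) < 1}`, the ratio `ω₁(n+e_i)/ω₁(n)` tends to `0`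
as `∑ n_j → ∞` over multi-indices `n` with `n_i = b`. -/
theorem statement9 (m : ℕ) (hm : 1 ≤ m) (p : Fin m → ℝ) (hp : ∀ j, 0 < p j)
    (ω₁ : (Fin m → ℕ) → ℝ)
    (hω₁ : ∀ α : Fin m → ℕ,
      ω₁ α = ∫ z in {z : Fin m → ℂ | ∑ j, ‖z j‖ ^ (2 * p j) < 1},
        ∏ j, ‖z j‖ ^ (2 * α j))
    (i : Fin m) (b : ℕ) :
    Tendsto (fun n : Fin m → ℕ => ω₁ (Function.update n i (n i + 1)) / ω₁ n)
      (Filter.comap (fun n : Fin m → ℕ => ∑ j, n j) Filter.atTop ⊓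
        Filter.principal {n : Fin m → ℕ | n i = b})
      (nhds 0) :=
  statement9_general m p hp ω₁ hω₁ i b
end

section
/- Let H be a complex Hilbert space, let m ≥ 1, and let M_1,…,M_m be bounded linear operators on H such that M_j M_k* − M_k* M_j is compact for all j, k. Let K ⊆ H be a closed subspace invariant under every M_j, let P be the orthogonal projection onto K, and Q := 1 − P. Then the following are equivalent: (1) for all j, k, the operator P M_j P M_k* P − P M_k* P M_j P is compact (essential normality of the restricted tuple on K); (2) for all j, k, the operator Q M_j Q M_k* Q − Q M_k* Q M_j Q is compact (essential normality of the compressed tuple on K^⊥); (3) for every j, the commutator M_j P − P M_j is compact; (4) for every j, P M_j Q is compact; (5) for every j, the commutator M_j Q − Q M_j is compact; (6) for every j, Q M_j* P is compact. -/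
open ContinuousLinearMap

/-
Modulo compact operators everything is governed by `B_j = P M_j Q`: invariance of `K` gives
`[M_j, P] = -B_j`, `[M_j, Q] = B_j` and `Q M_j* P = B_j*`, while compressing the compact
commutator `[M_j, M_k*]` to `K` resp. `K^⊥` yields the restricted resp. compressed commutator up to
`B_j B_k*` resp. `B_k* B_j`. For `j = k` these are `B_j B_j*` and `B_j* B_j`, and a bounded
operator `T` with `T* T` compact is itself compact, since `‖T x‖² ≤ ‖T* T x‖ ‖x‖`.
-/

theorem TotallyBounded.image_of_forall_dist_lt {α β γ : Type*} [PseudoMetricSpace β]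
    [PseudoMetricSpace γ] {f : α → β} {g : α → γ} {s : Set α} (hg : TotallyBounded (g '' s))
    (hfg : ∀ ε > 0, ∃ δ > 0, ∀ x ∈ s, ∀ y ∈ s, dist (g x) (g y) < δ → dist (f x) (f y) < ε) :
    TotallyBounded (f '' s) := by
  rw [totallyBounded_iff_ultrafilter] at hg ⊢
  intro U hU
  have hfs : f '' s ∈ U := Filter.le_principal_iff.mp hU
  set V := Ultrafilter.ofComapInfPrincipal hfs
  have hs : s ∈ V := Ultrafilter.ofComapInfPrincipal_mem hfs
  have hgV : Cauchy (Filter.map g V) :=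
    hg (V.map g) (Filter.le_principal_iff.mpr (Filter.image_mem_map hs))
  rw [← Ultrafilter.ofComapInfPrincipal_eq_of_map hfs, Ultrafilter.coe_map]
  refine Metric.cauchy_iff.mpr ⟨inferInstance, fun ε hε => ?_⟩
  obtain ⟨δ, hδ, hδε⟩ := hfg ε hε
  obtain ⟨t, ht, htδ⟩ := (Metric.cauchy_iff.mp hgV).2 δ hδ
  refine ⟨f '' (g ⁻¹' t ∩ s), Filter.image_mem_map (Filter.inter_mem ht hs), ?_⟩
  rintro _ ⟨x, hx, rfl⟩ _ ⟨y, hy, rfl⟩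
  exact hδε x hx.2 y hy.2 (htδ _ hx.1 _ hy.1)

section CompactOperators

variable {R M : Type*} [Ring R] [TopologicalSpace M] [AddCommGroup M]
  [IsTopologicalAddGroup M] [Module R M]

variable (R M) in
def compactOperatorIdeal : TwoSidedIdeal (M →L[R] M) :=
  .mk' {T | IsCompactOperator T} isCompactOperator_zero (fun hS hT => hS.add hT)
    (fun hT => hT.neg) (fun {S _} hT => hT.clm_comp S) (fun {_ T} hS => hS.comp_clm T)

theorem mem_compactOperatorIdeal {T : M →L[R] M} :
    T ∈ compactOperatorIdeal R M ↔ IsCompactOperator T :=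
  TwoSidedIdeal.mem_mk' ..

end CompactOperators

section Hilbert

variable {𝕜 E F : Type*} [RCLike 𝕜] [NormedAddCommGroup E] [InnerProductSpace 𝕜 E]
  [CompleteSpace E] [NormedAddCommGroup F] [InnerProductSpace 𝕜 F] [CompleteSpace F]

theorem ContinuousLinearMap.norm_apply_sq_le_norm_adjoint_comp_self_apply_mul_norm
    (T : E →L[𝕜] F) (x : E) : ‖T x‖ ^ 2 ≤ ‖(adjoint T ∘L T) x‖ * ‖x‖ := by
  rw [apply_norm_sq_eq_inner_adjoint_left]
  exact re_inner_le_norm _ _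

theorem IsCompactOperator.of_adjoint_comp_self {T : E →L[𝕜] F}
    (h : IsCompactOperator (adjoint T ∘L T)) : IsCompactOperator T := by
  refine
    (isCompactOperator_iff_isCompact_closure_image_closedBall (T : E →ₗ[𝕜] F) one_pos).mpr ?_
  refine (TotallyBounded.closure ?_).isCompact_of_isClosed isClosed_closure
  refine TotallyBounded.image_of_forall_dist_lt (g := adjoint T ∘L T)
    ((h.isCompact_closure_image_closedBall 1).totallyBounded.subset subset_closure)
    fun ε hε => ⟨ε ^ 2 / 2, by positivity, fun x hx y hy hxy => ?_⟩
  rw [mem_closedBall_zero_iff] at hx hy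
  have hxy2 : ‖x - y‖ ≤ 2 := (norm_sub_le x y).trans (by linarith)
  rw [dist_eq_norm, ← map_sub] at hxy ⊢
  refine lt_of_pow_lt_pow_left₀ 2 hε.le ?_
  calc ‖T (x - y)‖ ^ 2 ≤ ‖(adjoint T ∘L T) (x - y)‖ * ‖x - y‖ :=
        T.norm_apply_sq_le_norm_adjoint_comp_self_apply_mul_norm _
    _ ≤ ‖(adjoint T ∘L T) (x - y)‖ * 2 := by gcongr
    _ < ε ^ 2 / 2 * 2 := by gcongr
    _ = ε ^ 2 := by ring

theorem mem_compactOperatorIdeal_of_star_mul_self_mem {T : E →L[𝕜] E}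
    (h : star T * T ∈ compactOperatorIdeal 𝕜 E) : T ∈ compactOperatorIdeal 𝕜 E :=
  mem_compactOperatorIdeal.mpr (.of_adjoint_comp_self (mem_compactOperatorIdeal.mp h))

end Hilbert

namespace TwoSidedIdeal

variable {R : Type*} [Ring R] [StarRing R] {I : TwoSidedIdeal R}

theorem star_mem_of_forall_star_mul_self_mem (hI : ∀ x, star x * x ∈ I → x ∈ I) {x : R}
    (hx : x ∈ I) : star x ∈ I :=
  hI _ (by simpa only [star_star] using I.mul_mem_right _ _ hx)

theorem mem_of_mul_star_self_mem (hI : ∀ x, star x * x ∈ I → x ∈ I) {x : R}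
    (hx : x * star x ∈ I) : x ∈ I := by
  simpa only [star_star] using
    star_mem_of_forall_star_mul_self_mem hI (hI (star x) (by simpa only [star_star] using hx))

end TwoSidedIdeal

section Compression

variable {R : Type*} [Ring R] {P Q M : R}

theorem commutator_eq_neg_offDiag_of_invariant (hQ : Q = 1 - P) (hinv : P * M * P = M * P) :
    M * P - P * M = -(P * M * Q) := by
  subst hQ
  simp only [mul_sub, mul_one, hinv]
  abel

theorem commutator_compl_eq_offDiag_of_invariant (hQ : Q = 1 - P) (hinv : P * M * P = M * P) :
    M * Q - Q * M = P * M * Q := by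
  subst hQ
  simp only [mul_sub, sub_mul, mul_one, one_mul, hinv]
  abel

theorem compression_commutator_eq_of_invariant (hP : IsIdempotentElem P) (hQ : Q = 1 - P)
    (hinv : P * M * P = M * P) (N : R) :
    P * M * P * N * P - P * N * P * M * P =
      P * (M * N - N * M) * P - P * M * Q * (Q * N * P) := by
  have hinv₁ : P * (M * P) = M * P := by rw [← mul_assoc, hinv]
  have hinv₂ (y : R) : P * (M * (P * y)) = M * (P * y) := by simp only [← mul_assoc, hinv]
  subst hQ
  simp only [mul_sub, sub_mul, mul_one, one_mul, mul_assoc, hP.mul_self_mul, hinv₁, hinv₂]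
  abel

theorem compl_compression_commutator_eq_of_invariant (hP : IsIdempotentElem P) (hQ : Q = 1 - P)
    (hinv : P * M * P = M * P) (N : R) :
    Q * M * Q * N * Q - Q * N * Q * M * Q =
      Q * (M * N - N * M) * Q + Q * N * P * (P * M * Q) := by
  have hinv₁ : P * (M * P) = M * P := by rw [← mul_assoc, hinv]
  subst hQ
  simp only [mul_sub, sub_mul, mul_one, one_mul, mul_assoc, hP.mul_self_mul, hinv₁]
  abel

end Compression

theorem IsStarProjection.tfae_mem_twoSidedIdeal {R ι : Type*} [Ring R] [StarRing R]
    {I : TwoSidedIdeal R} (hI : ∀ x, star x * x ∈ I → x ∈ I) {M : ι → R}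
    (hM : ∀ j k, M j * star (M k) - star (M k) * M j ∈ I) {P Q : R} (hP : IsStarProjection P)
    (hQ : Q = 1 - P) (hinv : ∀ j, P * M j * P = M j * P) :
    [∀ j k, P * M j * P * star (M k) * P - P * star (M k) * P * M j * P ∈ I,
      ∀ j k, Q * M j * Q * star (M k) * Q - Q * star (M k) * Q * M j * Q ∈ I,
      ∀ j, M j * P - P * M j ∈ I,
      ∀ j, P * M j * Q ∈ I,
      ∀ j, M j * Q - Q * M j ∈ I,
      ∀ j, Q * star (M j) * P ∈ I].TFAE := by
  have hstar (j : ι) : star (P * M j * Q) = Q * star (M j) * P := by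
    have hQsa : IsSelfAdjoint Q := hQ ▸ (IsSelfAdjoint.one R).sub hP.isSelfAdjoint
    simp only [star_mul, hP.isSelfAdjoint.star_eq, hQsa.star_eq, mul_assoc]
  have hcomp j k :=
    compression_commutator_eq_of_invariant hP.isIdempotentElem hQ (hinv j) (star (M k))
  have hcompl j k :=
    compl_compression_commutator_eq_of_invariant hP.isIdempotentElem hQ (hinv j) (star (M k))
  tfae_have 3 ↔ 4 := forall_congr' fun j => by
    rw [commutator_eq_neg_offDiag_of_invariant hQ (hinv j), neg_mem_iff]
  tfae_have 4 ↔ 5 := forall_congr' fun j => by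
    rw [commutator_compl_eq_offDiag_of_invariant hQ (hinv j)]
  tfae_have 4 ↔ 6 := forall_congr' fun j => by
    rw [← hstar]
    refine ⟨I.star_mem_of_forall_star_mul_self_mem hI, fun h => ?_⟩
    simpa only [star_star] using I.star_mem_of_forall_star_mul_self_mem hI h
  tfae_have 4 → 1 := fun h j k => by
    rw [hcomp]
    exact I.sub_mem (I.mul_mem_right _ _ (I.mul_mem_left _ _ (hM j k))) (I.mul_mem_right _ _ (h j))
  tfae_have 4 → 2 := fun h j k => by
    rw [hcompl]
    exact I.add_mem (I.mul_mem_right _ _ (I.mul_mem_left _ _ (hM j k))) (I.mul_mem_left _ _ (h j))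
  tfae_have 1 → 4 := fun h j => by
    refine I.mem_of_mul_star_self_mem hI ?_
    have := I.sub_mem (I.mul_mem_right _ P (I.mul_mem_left P _ (hM j j))) (h j j)
    rwa [hcomp, sub_sub_cancel, ← hstar] at this
  tfae_have 2 → 4 := fun h j => by
    refine hI _ ?_
    have := I.sub_mem (h j j) (I.mul_mem_right _ Q (I.mul_mem_left Q _ (hM j j)))
    rwa [hcompl, add_sub_cancel_left, ← hstar] at this
  tfae_finish

theorem statement12_general {H : Type*} [NormedAddCommGroup H] [InnerProductSpace ℂ H]
    [CompleteSpace H] (m : ℕ) (M : Fin m → H →L[ℂ] H)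
    (hM : ∀ j k : Fin m,
      IsCompactOperator
        ⇑(M j ∘L ContinuousLinearMap.adjoint (M k)
          - ContinuousLinearMap.adjoint (M k) ∘L M j))
    (K : Submodule ℂ H) (hKclosed : IsClosed (K : Set H))
    (hKinv : ∀ j : Fin m, ∀ x ∈ K, M j x ∈ K)
    (P Q : H →L[ℂ] H)
    (hP : ∀ x : H, P x ∈ K ∧ x - P x ∈ Kᗮ)
    (hQ : Q = 1 - P) :
    [ (∀ j k : Fin m, IsCompactOperator
        ⇑(P ∘L M j ∘L P ∘L ContinuousLinearMap.adjoint (M k) ∘L P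
          - P ∘L ContinuousLinearMap.adjoint (M k) ∘L P ∘L M j ∘L P)),
      (∀ j k : Fin m, IsCompactOperator
        ⇑(Q ∘L M j ∘L Q ∘L ContinuousLinearMap.adjoint (M k) ∘L Q
          - Q ∘L ContinuousLinearMap.adjoint (M k) ∘L Q ∘L M j ∘L Q)),
      (∀ j : Fin m, IsCompactOperator ⇑(M j ∘L P - P ∘L M j)),
      (∀ j : Fin m, IsCompactOperator ⇑(P ∘L M j ∘L Q)),
      (∀ j : Fin m, IsCompactOperator ⇑(M j ∘L Q - Q ∘L M j)),
      (∀ j : Fin m, IsCompactOperator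
        ⇑(Q ∘L ContinuousLinearMap.adjoint (M j) ∘L P)) ].TFAE := by
  have : CompleteSpace K := hKclosed.completeSpace_coe
  have hPK : P = K.starProjection :=
    ext fun x => (K.eq_starProjection_of_mem_orthogonal (hP x).1 (hP x).2).symm
  have hinv (j : Fin m) : P * M j * P = M j * P := ext fun x => by
    rw [hPK]
    exact K.starProjection_eq_self_iff.mpr (hKinv j _ (K.starProjection_apply_mem x))
  have hPproj : IsStarProjection P := by
    rw [hPK]
    exact isStarProjection_starProjection
  have hM' (j k : Fin m) : M j * star (M k) - star (M k) * M j ∈ compactOperatorIdeal ℂ H :=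
    mem_compactOperatorIdeal.mpr (hM j k)
  have htfae := hPproj.tfae_mem_twoSidedIdeal (I := compactOperatorIdeal ℂ H)
    (fun _ => mem_compactOperatorIdeal_of_star_mul_self_mem) hM' hQ hinv
  simpa only [mem_compactOperatorIdeal, star_eq_adjoint, mul_def, comp_assoc] using htfae

/-- Arveson–Douglas: for an essentially normal tuple `M_1,…,M_m` on a Hilbert
space `H` and a closed invariant subspace `K` with orthogonal projection `P`
(characterized by `P x ∈ K` and `x − P x ⟂ K`) and `Q = 1 − P`, the following
are equivalent: essential normality of the restricted tuple on `K`, essential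
normality of the compressed tuple on `K^⊥`, compactness of all `[M_j, P]`,
of all `P M_j Q`, of all `[M_j, Q]`, and of all `Q M_j* P`. -/
theorem statement12 {H : Type*} [NormedAddCommGroup H] [InnerProductSpace ℂ H]
    [CompleteSpace H] (m : ℕ) (hm : 1 ≤ m) (M : Fin m → H →L[ℂ] H)
    (hM : ∀ j k : Fin m,
      IsCompactOperator
        ⇑(M j ∘L ContinuousLinearMap.adjoint (M k)
          - ContinuousLinearMap.adjoint (M k) ∘L M j))
    (K : Submodule ℂ H) (hKclosed : IsClosed (K : Set H))
    (hKinv : ∀ j : Fin m, ∀ x ∈ K, M j x ∈ K)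
    (P Q : H →L[ℂ] H)
    (hP : ∀ x : H, P x ∈ K ∧ x - P x ∈ Kᗮ)
    (hQ : Q = 1 - P) :
    [ (∀ j k : Fin m, IsCompactOperator
        ⇑(P ∘L M j ∘L P ∘L ContinuousLinearMap.adjoint (M k) ∘L P
          - P ∘L ContinuousLinearMap.adjoint (M k) ∘L P ∘L M j ∘L P)),
      (∀ j k : Fin m, IsCompactOperator
        ⇑(Q ∘L M j ∘L Q ∘L ContinuousLinearMap.adjoint (M k) ∘L Q
          - Q ∘L ContinuousLinearMap.adjoint (M k) ∘L Q ∘L M j ∘L Q)),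
      (∀ j : Fin m, IsCompactOperator ⇑(M j ∘L P - P ∘L M j)),
      (∀ j : Fin m, IsCompactOperator ⇑(P ∘L M j ∘L Q)),
      (∀ j : Fin m, IsCompactOperator ⇑(M j ∘L Q - Q ∘L M j)),
      (∀ j : Fin m, IsCompactOperator
        ⇑(Q ∘L ContinuousLinearMap.adjoint (M j) ∘L P)) ].TFAE :=
  statement12_general m M hM K hKclosed hKinv P Q hP hQ
end
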